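/- arXiv:2206.03172 — 2 statements merged into one kernel-verified Lean document; each statement's English description precedes it below -/
import Mathlib

section
/- Let (g, t) be a construction. Then the complete trail sequence CTS(g, t) = TES([]_t) contains all and only the well-formed non-extendable trails in (g, t) that target t: every trail occurring in CTS(g, t) is a well-formed non-extendable trail targeting t, and every well-formed non-extendable trail of g targeting t occurs in CTS(g, t). -/
namespace RST

/-! ## Type systems -/

/-- A relation (given as a set of pairs) is a partial order on the set `Ty`. -/
def IsPartialOrderOn {U : Type*} (Ty : Set U) (le : Set (U × U)) : Prop :=
  (∀ p ∈ le, p.1 ∈ Ty ∧ p.2 ∈ Ty) ∧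
  (∀ τ ∈ Ty, (τ, τ) ∈ le) ∧
  (∀ a b : U, (a, b) ∈ le → (b, a) ∈ le → a = b) ∧
  (∀ a b c : U, (a, b) ∈ le → (b, c) ∈ le → (a, c) ∈ le)

/-- The subtype closure of `Ty'` in the type system `(Ty, le)`. -/
def subtypeClosure {U : Type*} (Ty : Set U) (le : Set (U × U)) (Ty' : Set U) : Set U :=
  {τ | τ ∈ Ty ∧ ∃ τ' ∈ Ty', (τ, τ') ∈ le}

/-- The set of all subtype closures of subsets of `Ty`. -/
def SC {U : Type*} (Ty : Set U) (le : Set (U × U)) : Set (Set U) :=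
  {S | ∃ Ty' ⊆ Ty, S = subtypeClosure Ty le Ty'}

/-- The candidate order of an upper bound extension: the reflexive closure (on `Ty ∪ Tystar`)
of `le` together with the pairs `(τ, f S)` for `τ ∈ S ∈ SC Ty le`. -/
def upperBoundRel {U : Type*} (Ty Tystar : Set U) (le : Set (U × U)) (f : Set U → U) :
    Set (U × U) :=
  (le ∪ {p : U × U | ∃ S ∈ SC Ty le, p.1 ∈ S ∧ p.2 = f S}) ∪
    {p : U × U | p.1 = p.2 ∧ p.1 ∈ Ty ∪ Tystar}

/-! ## Graphs -/

/-- A (raw) directed labelled bipartite graph: tokens `Tk`, configurators `Cf`, arrows `Arr`,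
incidence, arrow indices and vertex labels all given relationally (as sets of pairs), so that
unions of graphs are componentwise unions. -/
structure PreGraph (V A L : Type*) where
  Tk : Set V
  Cf : Set V
  Arr : Set A
  inc : Set (A × (V × V))
  ia : Set (A × ℕ)
  tl : Set (V × L)
  cl : Set (V × L)

variable {V A L : Type*}

instance : Union (PreGraph V A L) :=
  ⟨fun g h =>
    ⟨g.Tk ∪ h.Tk, g.Cf ∪ h.Cf, g.Arr ∪ h.Arr, g.inc ∪ h.inc, g.ia ∪ h.ia,
      g.tl ∪ h.tl, g.cl ∪ h.cl⟩⟩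

def PreGraph.Subgraph (h g : PreGraph V A L) : Prop :=
  h.Tk ⊆ g.Tk ∧ h.Cf ⊆ g.Cf ∧ h.Arr ⊆ g.Arr ∧ h.inc ⊆ g.inc ∧ h.ia ⊆ g.ia ∧
    h.tl ⊆ g.tl ∧ h.cl ⊆ g.cl

/-- The vertices adjacent to `u` (together with `u`). -/
def PreGraph.adjTo (g : PreGraph V A L) (u : V) : Set V :=
  {u} ∪ {v | ∃ a ∈ g.Arr, (a, (v, u)) ∈ g.inc ∨ (a, (u, v)) ∈ g.inc}

/-- The arrows incident to `u`. -/
def PreGraph.incidentArrows (g : PreGraph V A L) (u : V) : Set A :=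
  {a | a ∈ g.Arr ∧ ∃ v, (a, (v, u)) ∈ g.inc ∨ (a, (u, v)) ∈ g.inc}

/-- The restriction of a graph to given vertex and arrow sets. -/
def PreGraph.restrict (g : PreGraph V A L) (Vs : Set V) (As : Set A) : PreGraph V A L :=
  ⟨g.Tk ∩ Vs, g.Cf ∩ Vs, g.Arr ∩ As, {q | q ∈ g.inc ∧ q.1 ∈ As},
    {q | q ∈ g.ia ∧ q.1 ∈ As}, {q | q ∈ g.tl ∧ q.1 ∈ Vs}, {q | q ∈ g.cl ∧ q.1 ∈ Vs}⟩

/-- The neighbourhood of a vertex `u`. -/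
def PreGraph.Nh (g : PreGraph V A L) (u : V) : PreGraph V A L :=
  g.restrict (g.adjTo u) (g.incidentArrows u)

/-- A set of pairs is (the graph of) a function with domain `D`. -/
def IsFunctionOn {α β : Type*} (R : Set (α × β)) (D : Set α) : Prop :=
  (∀ p ∈ R, p.1 ∈ D) ∧ ∀ x ∈ D, ∃! y, (x, y) ∈ R

/-- A raw graph is a genuine directed labelled bipartite graph. -/
def IsGraph (g : PreGraph V A L) : Prop :=
  Disjoint g.Tk g.Cf ∧
  IsFunctionOn g.inc g.Arr ∧
  (∀ a v w, (a, (v, w)) ∈ g.inc → (v ∈ g.Tk ∧ w ∈ g.Cf) ∨ (v ∈ g.Cf ∧ w ∈ g.Tk)) ∧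
  IsFunctionOn g.ia g.Arr ∧ IsFunctionOn g.tl g.Tk ∧ IsFunctionOn g.cl g.Cf

/-- `ars` is the list of incoming arrows of `u`, listed in increasing index order
(the arrow at position `i` carries index `i+1`). -/
def InArrowSeq (g : PreGraph V A L) (u : V) (ars : List A) : Prop :=
  ars.Nodup ∧ (∀ a : A, a ∈ ars ↔ a ∈ g.Arr ∧ ∃ w, (a, (w, u)) ∈ g.inc) ∧
  ∀ (i : ℕ) (a : A), ars[i]? = some a → (a, i + 1) ∈ g.ia

/-- `t` is an output token of the configurator `u`. -/
def OutputTok (g : PreGraph V A L) (u t : V) : Prop :=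
  ∃ a ∈ g.Arr, (a, (u, t)) ∈ g.inc

/-- `ts` is the input token-sequence of the configurator `u`. -/
def InputTokSeq (g : PreGraph V A L) (u : V) (ts : List V) : Prop :=
  ∃ ars : List A, InArrowSeq g u ars ∧
    List.Forall₂ (fun a v => (a, (v, u)) ∈ g.inc) ars ts

/-- `τs` is the input type-sequence of the configurator `u`. -/
def InputTypeSeq (g : PreGraph V A L) (u : V) (τs : List L) : Prop :=
  ∃ ts : List V, InputTokSeq g u ts ∧ List.Forall₂ (fun v τ => (v, τ) ∈ g.tl) ts τs

/-- `g` is a configuration of the constructor `c` (with signature `(ins, out)`),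
whose single configurator is `u`. -/
def IsConfiguration (le : Set (L × L)) (g : PreGraph V A L) (u : V) (c : L)
    (ins : List L) (out : L) : Prop :=
  IsGraph g ∧ g.Cf = {u} ∧ (u, c) ∈ g.cl ∧
  g.Tk = {v | ∃ a ∈ g.Arr, (a, (v, u)) ∈ g.inc ∨ (a, (u, v)) ∈ g.inc} ∧
  (∃! a0 : A, a0 ∈ g.Arr ∧ ∃ w, (a0, (u, w)) ∈ g.inc) ∧
  (∀ a0 ∈ g.Arr, ∀ w : V, (a0, (u, w)) ∈ g.inc →
      (a0, 0) ∈ g.ia ∧ ∃ σ, (w, σ) ∈ g.tl ∧ (σ, out) ∈ le) ∧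
  (∃ ars : List A, InArrowSeq g u ars ∧ ars.length = ins.length ∧
    ∀ (i : ℕ) (a : A) (τ : L), ars[i]? = some a → ins[i]? = some τ →
      ∃ w σ, (a, (w, u)) ∈ g.inc ∧ (w, σ) ∈ g.tl ∧ (σ, τ) ∈ le)

/-- A structure graph for the constructor specification `(C, sig)` over types `(Ty, le)`. -/
def IsStructureGraph (Ty : Set L) (le : Set (L × L)) (C : Set L)
    (sig : Set (L × (List L × L))) (g : PreGraph V A L) : Prop :=
  IsGraph g ∧ (∀ x τ, (x, τ) ∈ g.tl → τ ∈ Ty) ∧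
  ∀ u ∈ g.Cf, ∃ c ins out, (u, c) ∈ g.cl ∧ c ∈ C ∧ (c, (ins, out)) ∈ sig ∧
    IsConfiguration le (g.Nh u) u c ins out

/-! ## Construction spaces -/

/-- The raw data of a construction space: a type system, a constructor specification and
a structure graph. -/
structure CSpace (V A L : Type*) where
  Ty : Set L
  le : Set (L × L)
  C : Set L
  sig : Set (L × (List L × L))
  G : PreGraph V A L

instance : Union (CSpace V A L) :=
  ⟨fun c d => ⟨c.Ty ∪ d.Ty, c.le ∪ d.le, c.C ∪ d.C, c.sig ∪ d.sig, c.G ∪ d.G⟩⟩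

/-- The raw data forms a genuine construction space. -/
def IsCSpace (Cs : CSpace V A L) : Prop :=
  IsPartialOrderOn Cs.Ty Cs.le ∧ Disjoint Cs.C Cs.Ty ∧ IsFunctionOn Cs.sig Cs.C ∧
  (∀ c ins out, (c, (ins, out)) ∈ Cs.sig →
      ins ≠ [] ∧ (∀ τ ∈ ins, τ ∈ Cs.Ty) ∧ out ∈ Cs.Ty) ∧
  IsStructureGraph Cs.Ty Cs.le Cs.C Cs.sig Cs.G

/-- Token-functionality of the constructors of a structure graph. -/
def TokenFunctional (g : PreGraph V A L) : Prop :=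
  ∀ u u' c, u ∈ g.Cf → u' ∈ g.Cf → (u, c) ∈ g.cl → (u', c) ∈ g.cl →
    ∀ ts, InputTokSeq g u ts → InputTokSeq g u' ts →
      ∀ t t', OutputTok g u t → OutputTok g u' t' → t = t'

/-- Type-functionality of the constructors of a structure graph. -/
def TypeFunctional (g : PreGraph V A L) : Prop :=
  ∀ u u' c, u ∈ g.Cf → u' ∈ g.Cf → (u, c) ∈ g.cl → (u', c) ∈ g.cl →
    ∀ τs, InputTypeSeq g u τs → InputTypeSeq g u' τs →
      ∀ t t' τ τ', OutputTok g u t → OutputTok g u' t' →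
        (t, τ) ∈ g.tl → (t', τ') ∈ g.tl → τ = τ'

def IsFunctionalGraph (g : PreGraph V A L) : Prop :=
  TokenFunctional g ∧ TypeFunctional g

/-! ## Representational systems -/

/-- The raw data of a representational system: grammatical, entailment and identification
spaces. -/
structure RSystem (V A L : Type*) where
  Gs : CSpace V A L
  Es : CSpace V A L
  Is : CSpace V A L

instance : Union (RSystem V A L) :=
  ⟨fun r s => ⟨r.Gs ∪ s.Gs, r.Es ∪ s.Es, r.Is ∪ s.Is⟩⟩

/-- The universal space of a representational system. -/
def RSystem.uspace (R : RSystem V A L) : CSpace V A L := (R.Gs ∪ R.Es) ∪ R.Is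

/-- `R` is a representational system formed over the type system `(Ty, le)` and the
meta-type system `(MTy, Mle)`. -/
def IsRSystem (R : RSystem V A L) (Ty : Set L) (le : Set (L × L))
    (MTy : Set L) (Mle : Set (L × L)) : Prop :=
  IsPartialOrderOn Ty le ∧ IsPartialOrderOn MTy Mle ∧
  IsPartialOrderOn (Ty ∪ MTy) (le ∪ Mle) ∧
  R.Gs.Ty = Ty ∧ R.Gs.le = le ∧ IsCSpace R.Gs ∧ IsFunctionalGraph R.Gs.G ∧
  R.Es.Ty = Ty ∧ R.Es.le = le ∧ IsCSpace R.Es ∧ R.Es.G.Tk ⊆ R.Gs.G.Tk ∧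
  R.Is.Ty = Ty ∪ MTy ∧ R.Is.le = le ∪ Mle ∧ IsCSpace R.Is ∧
  (∀ x ∈ R.Is.G.Tk, x ∉ R.Gs.G.Tk → ∃ τ ∈ MTy, (x, τ) ∈ R.Is.G.tl) ∧
  (∀ x ∈ R.Is.G.Tk, (∃ u ∈ R.Is.G.Cf, OutputTok R.Is.G u x) → x ∉ R.Gs.G.Tk) ∧
  IsCSpace (R.Gs ∪ R.Es) ∧ IsCSpace (R.Gs ∪ R.Is) ∧ IsCSpace (R.Es ∪ R.Is) ∧
  Disjoint R.Gs.C R.Es.C ∧ Disjoint R.Gs.C R.Is.C ∧ Disjoint R.Es.C R.Is.C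

/-- `(R, R', Is'')` is an inter-representational-system encoding, where `R` is formed over
`(Ty, le)` and `(MTy, Mle)`, `R'` over `(Ty', le')` and `(MTy', Mle')`, and `Is''` is an
identification space formed over `(Ty ∪ Ty', le ∪ le')` and `(MTy'', Mle'')`. -/
def IsIRSE (R R' : RSystem V A L) (Is'' : CSpace V A L)
    (Ty : Set L) (le : Set (L × L)) (MTy : Set L) (Mle : Set (L × L))
    (Ty' : Set L) (le' : Set (L × L)) (MTy' : Set L) (Mle' : Set (L × L))
    (MTy'' : Set L) (Mle'' : Set (L × L)) : Prop :=
  IsRSystem R Ty le MTy Mle ∧ IsRSystem R' Ty' le' MTy' Mle' ∧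
  IsRSystem (R ∪ R') (Ty ∪ Ty') (le ∪ le') (MTy ∪ MTy') (Mle ∪ Mle') ∧
  IsPartialOrderOn MTy'' Mle'' ∧
  IsPartialOrderOn ((Ty ∪ Ty') ∪ MTy'') ((le ∪ le') ∪ Mle'') ∧
  Is''.Ty = (Ty ∪ Ty') ∪ MTy'' ∧ Is''.le = (le ∪ le') ∪ Mle'' ∧ IsCSpace Is'' ∧
  MTy ∪ MTy' ⊆ MTy'' ∧ Mle ∪ Mle' ⊆ Mle'' ∧
  (∀ x ∈ Is''.G.Tk, x ∉ (R.Gs ∪ R'.Gs).G.Tk → ∃ τ ∈ MTy'', (x, τ) ∈ Is''.G.tl) ∧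
  (∀ x ∈ Is''.G.Tk, (∃ u ∈ Is''.G.Cf, OutputTok Is''.G u x) →
      x ∉ (R.Gs ∪ R'.Gs).G.Tk) ∧
  IsCSpace ((R.Gs ∪ R'.Gs) ∪ Is'') ∧ IsCSpace ((R.Es ∪ R'.Es) ∪ Is'') ∧
  IsCSpace ((R.Is ∪ R'.Is) ∪ Is'') ∧
  Disjoint Is''.C (R.Gs ∪ R'.Gs).C ∧ Disjoint Is''.C (R.Es ∪ R'.Es).C ∧
  Disjoint Is''.C (R.Is ∪ R'.Is).C

/-! ## Trails -/

/-- A trail candidate: a list of arrows together with an associated source and target vertex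
(needed for the empty trail `[]_v`). -/
structure Trail (V A : Type*) where
  arrows : List A
  src : V
  tgt : V

/-- The empty trail `[]_v`. -/
def Trail.nil {V A : Type*} (v : V) : Trail V A := ⟨[], v, v⟩

/-- Concatenation `e ⊕ w` of trails. -/
def Trail.append {V A : Type*} (e w : Trail V A) : Trail V A :=
  ⟨e.arrows ++ w.arrows, e.src, w.tgt⟩

/-- The image of a trail under vertex/arrow maps. -/
def Trail.map {V A : Type*} (fv : V → V) (fa : A → A) (tr : Trail V A) : Trail V A :=
  ⟨tr.arrows.map fa, fv tr.src, fv tr.tgt⟩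

/-- The arrows chain through the graph from `s` to `t`. -/
def ChainIn (g : PreGraph V A L) : List A → V → V → Prop
  | [], s, t => s = t
  | a :: rest, s, t => a ∈ g.Arr ∧ ∃ m, (a, (s, m)) ∈ g.inc ∧ ChainIn g rest m t

/-- `tr` is a trail in `g`. -/
def IsTrailIn (g : PreGraph V A L) (tr : Trail V A) : Prop :=
  tr.arrows.Nodup ∧ ChainIn g tr.arrows tr.src tr.tgt ∧
  tr.src ∈ g.Tk ∪ g.Cf ∧ tr.tgt ∈ g.Tk ∪ g.Cf

/-- A trail is well-formed provided its source and target are tokens. -/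
def WellFormed (g : PreGraph V A L) (tr : Trail V A) : Prop :=
  tr.src ∈ g.Tk ∧ tr.tgt ∈ g.Tk

/-- `tr` is (source-)extendable by the arrow `a`. -/
def ExtendableBy (g : PreGraph V A L) (tr : Trail V A) (a : A) : Prop :=
  a ∈ g.Arr ∧ a ∉ tr.arrows ∧ ∃ s, (a, (s, tr.src)) ∈ g.inc

def Extendable (g : PreGraph V A L) (tr : Trail V A) : Prop :=
  ∃ a, ExtendableBy g tr a

def NonExtendable (g : PreGraph V A L) (tr : Trail V A) : Prop :=
  ¬ Extendable g tr

/-- `TES g tr S` holds iff `S` is the trail extension sequence of the trail `tr` in `g`,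
following the recursive definition of TES. -/
inductive TES (g : PreGraph V A L) : Trail V A → List (Trail V A) → Prop where
  | nonext (tr : Trail V A) (h : NonExtendable g tr) :
      TES g tr [⟨[], tr.src, tr.src⟩]
  | ext (tr : Trail V A) (a : A) (u : V) (ars : List A)
      (Ss : List (List (Trail V A)))
      (hext : ExtendableBy g tr a)
      (hinc : (a, (u, tr.src)) ∈ g.inc)
      (hars : InArrowSeq g u ars)
      (hlen : Ss.length = ars.length)
      (hrec : ∀ (i : ℕ) (ai : A) (si : V) (Si : List (Trail V A)),
          ars[i]? = some ai → Ss[i]? = some Si → (ai, (si, u)) ∈ g.inc →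
          TES g ⟨ai :: a :: tr.arrows, si, tr.tgt⟩ Si) :
      TES g tr (List.flatten (List.zipWith
        (fun (ai : A) (Si : List (Trail V A)) =>
          Si.map (fun e => (⟨e.arrows ++ [ai, a], e.src, tr.src⟩ : Trail V A)))
        ars Ss))

/-- The sequence of sources of a sequence of trails. -/
def srcSeq {V A : Type*} (S : List (Trail V A)) : List V := S.map Trail.src

/-- The right product `S ◁ w`, appending the trail `w` to each trail in `S`. -/
def rprod {V A : Type*} (S : List (Trail V A)) (w : Trail V A) : List (Trail V A) :=
  S.map fun e => e.append w

/-! ## Constructions -/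

/-- Every token is the target of at most one arrow. -/
def UniStructured (g : PreGraph V A L) : Prop :=
  ∀ x ∈ g.Tk, ∀ a ∈ g.Arr, ∀ b ∈ g.Arr,
    (∃ w, (a, (w, x)) ∈ g.inc) → (∃ w, (b, (w, x)) ∈ g.inc) → a = b

/-- `(g, t)` is a construction in the construction space `Cs`: `g` is a finite uni-structured
structure graph (a subgraph of the structure graph of `Cs`), `t` is a token of `g`, and every
vertex of `g` is the source of a trail targeting `t`. -/
def IsConstruction (Cs : CSpace V A L) (g : PreGraph V A L) (t : V) : Prop :=
  g.Subgraph Cs.G ∧ IsStructureGraph Cs.Ty Cs.le Cs.C Cs.sig g ∧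
  g.Tk.Finite ∧ g.Cf.Finite ∧ g.Arr.Finite ∧ UniStructured g ∧ t ∈ g.Tk ∧
  ∀ v ∈ g.Tk ∪ g.Cf, ∃ tr : Trail V A, IsTrailIn g tr ∧ tr.src = v ∧ tr.tgt = t

/-- `(g, t)` is a construction *in* `Cs` in the strong sense: moreover every configurator of `g`
has its full neighbourhood from the structure graph of `Cs`. -/
def IsConstructionIn (Cs : CSpace V A L) (g : PreGraph V A L) (t : V) : Prop :=
  IsConstruction Cs g t ∧ ∀ u ∈ g.Cf, g.Nh u = Cs.G.Nh u

/-- A trivial construction: the construct is its only vertex. -/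
def TrivialC (g : PreGraph V A L) (t : V) : Prop := g.Tk ∪ g.Cf = {t}

/-- A basic construction: exactly one configurator. -/
def BasicC (g : PreGraph V A L) : Prop := ∃ u, g.Cf = {u}

/-- The set of arrows occurring in a sequence of trails. -/
def trailArrowSet {V A : Type*} (TR : List (Trail V A)) : Set A :=
  {a | ∃ tr ∈ TR, a ∈ tr.arrows}

/-- The vertices of the `TR`-graph: vertices incident to arrows of trails of `TR`,
together with the associated vertex of any empty trail of `TR`. -/
def trailVertexSet (g : PreGraph V A L) (TR : List (Trail V A)) : Set V :=
  {v | (∃ a ∈ trailArrowSet TR, ∃ w, (a, (v, w)) ∈ g.inc ∨ (a, (w, v)) ∈ g.inc) ∨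
    ∃ tr ∈ TR, tr.arrows = [] ∧ tr.src = v}

/-- The `TR`-graph `v(TR)`. -/
def trGraph (g : PreGraph V A L) (TR : List (Trail V A)) : PreGraph V A L :=
  g.restrict (trailVertexSet g TR) (trailArrowSet TR)

/-- `((g', t), ics)` is a split of the construction `(g, t)`: `(g', t)` is a generator and
`ics` is the corresponding induced construction sequence (each induced construction is
`(v(TES(tri)), source(tri))`, the TES being computed in `(g, t)`). -/
def IsSplit (Cs : CSpace V A L) (g : PreGraph V A L) (t : V)
    (g' : PreGraph V A L) (ics : List (PreGraph V A L × V)) : Prop :=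
  IsConstruction Cs g' t ∧ g'.Subgraph g ∧
  ∃ trs : List (Trail V A), TES g' (Trail.nil t) trs ∧ ics.length = trs.length ∧
    ∀ (i : ℕ) (tri : Trail V A), trs[i]? = some tri →
      ∃ Si : List (Trail V A), TES g tri Si ∧ ics[i]? = some (trGraph g Si, tri.src)

/-! ## Decompositions -/

/-- A decomposition tree: vertices labelled by a graph and a token, with the incoming arrows
of every vertex given in index order by a list of subtrees. -/
inductive DTree (V A L : Type*) where
  | node : PreGraph V A L → V → List (DTree V A L) → DTree V A L

def DTree.rootGraph : DTree V A L → PreGraph V A L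
  | .node g _ _ => g

def DTree.rootTok : DTree V A L → V
  | .node _ t _ => t

def DTree.kids : DTree V A L → List (DTree V A L)
  | .node _ _ cs => cs

/-- `IsDecompositionOf Cs D g t` holds iff `D` is a decomposition of the construction
`(g, t)` in `Cs`. -/
inductive IsDecompositionOf (Cs : CSpace V A L) : DTree V A L → PreGraph V A L → V → Prop where
  | single (g : PreGraph V A L) (t : V) (h : IsConstruction Cs g t) :
      IsDecompositionOf Cs (.node g t []) g t
  | split (g : PreGraph V A L) (t : V) (g' : PreGraph V A L)
      (ics : List (PreGraph V A L × V)) (cs : List (DTree V A L))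
      (hc : IsConstruction Cs g t)
      (hsplit : IsSplit Cs g t g' ics)
      (hlen : cs.length = ics.length)
      (hrec : ∀ (i : ℕ) (ci : DTree V A L) (gi : PreGraph V A L) (ti : V),
          cs[i]? = some ci → ics[i]? = some (gi, ti) → IsDecompositionOf Cs ci gi ti) :
      IsDecompositionOf Cs (.node g' t cs) g t

/-- `LcsRel D ls` holds iff `ls` is the leaf construction-sequence of `D`. -/
inductive LcsRel : DTree V A L → List (PreGraph V A L × V) → Prop where
  | leaf (g : PreGraph V A L) (t : V) : LcsRel (.node g t []) [(g, t)]
  | node (g : PreGraph V A L) (t : V) (cs : List (DTree V A L))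
      (ls : List (List (PreGraph V A L × V)))
      (hne : cs ≠ []) (hlen : ls.length = cs.length)
      (h : ∀ (i : ℕ) (ci : DTree V A L) (li : List (PreGraph V A L × V)),
          cs[i]? = some ci → ls[i]? = some li → LcsRel ci li) :
      LcsRel (.node g t cs) ls.flatten

/-- `(p, w)` is one of the constructions labelling a vertex of the decomposition tree. -/
inductive LabelOf : DTree V A L → PreGraph V A L → V → Prop where
  | root (g : PreGraph V A L) (t : V) (cs : List (DTree V A L)) :
      LabelOf (.node g t cs) g t
  | child (g : PreGraph V A L) (t : V) (cs : List (DTree V A L))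
      (c : DTree V A L) (p : PreGraph V A L) (w : V) :
      c ∈ cs → LabelOf c p w → LabelOf (.node g t cs) p w

/-- The union of all the graphs labelling vertices of the decomposition tree
(the graph of the construction `ct(D)` of the decomposition `D`). -/
def DTree.ctGraph (D : DTree V A L) : PreGraph V A L :=
  ⟨{x | ∃ p w, LabelOf D p w ∧ x ∈ p.Tk},
   {x | ∃ p w, LabelOf D p w ∧ x ∈ p.Cf},
   {a | ∃ p w, LabelOf D p w ∧ a ∈ p.Arr},
   {q | ∃ p w, LabelOf D p w ∧ q ∈ p.inc},
   {q | ∃ p w, LabelOf D p w ∧ q ∈ p.ia},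
   {q | ∃ p w, LabelOf D p w ∧ q ∈ p.tl},
   {q | ∃ p w, LabelOf D p w ∧ q ∈ p.cl}⟩

/-- Every vertex label of the decomposition tree satisfies `P`. -/
inductive AllLabels (P : PreGraph V A L → V → Prop) : DTree V A L → Prop where
  | node (g : PreGraph V A L) (t : V) (cs : List (DTree V A L)) :
      P g t → (∀ c, c ∈ cs → AllLabels P c) → AllLabels P (.node g t cs)

/-- The subtree of a decomposition tree at a given position (a path of child indices). -/
def subtreeAt : List ℕ → DTree V A L → Option (DTree V A L)
  | [], D => some D
  | i :: rest, .node _ _ cs =>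
    match cs[i]? with
    | some c => subtreeAt rest c
    | none => none

/-! ## Patterns and embeddings -/

/-- An embedding of the graph `g` into the graph `p`: an isomorphism preserving arrow indices
and configurator labels, with token labels respecting the subtype relation `le`. -/
def IsEmbedding (le : Set (L × L)) (g p : PreGraph V A L) (fv : V → V) (fa : A → A) : Prop :=
  (∀ x ∈ g.Tk, fv x ∈ p.Tk) ∧ (∀ x ∈ g.Cf, fv x ∈ p.Cf) ∧
  (∀ x ∈ g.Tk ∪ g.Cf, ∀ y ∈ g.Tk ∪ g.Cf, fv x = fv y → x = y) ∧
  (∀ y ∈ p.Tk, ∃ x ∈ g.Tk, fv x = y) ∧ (∀ y ∈ p.Cf, ∃ x ∈ g.Cf, fv x = y) ∧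
  (∀ a ∈ g.Arr, fa a ∈ p.Arr) ∧
  (∀ a ∈ g.Arr, ∀ b ∈ g.Arr, fa a = fa b → a = b) ∧
  (∀ b ∈ p.Arr, ∃ a ∈ g.Arr, fa a = b) ∧
  (∀ a v w, (a, (v, w)) ∈ g.inc → (fa a, (fv v, fv w)) ∈ p.inc) ∧
  (∀ a n, (a, n) ∈ g.ia → (fa a, n) ∈ p.ia) ∧
  (∀ u c, (u, c) ∈ g.cl → (fv u, c) ∈ p.cl) ∧
  (∀ x τ, (x, τ) ∈ g.tl → ∃ σ, (fv x, σ) ∈ p.tl ∧ (τ, σ) ∈ le)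

/-- The construction `(g, t)` matches the pattern `(p, v)`. -/
def MatchesPattern (le : Set (L × L)) (g : PreGraph V A L) (t : V)
    (p : PreGraph V A L) (v : V) : Prop :=
  ∃ fv fa, IsEmbedding le g p fv fa ∧ fv t = v

/-- `Ps` is a pattern space for `Cs`: a construction space over the same type system and
constructor specification such that every construction of `Cs` matches some construction
of `Ps`. -/
def IsPatternSpace (Cs Ps : CSpace V A L) : Prop :=
  Ps.Ty = Cs.Ty ∧ Ps.le = Cs.le ∧ Ps.C = Cs.C ∧ Ps.sig = Cs.sig ∧ IsCSpace Ps ∧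
  ∀ g t, IsConstruction Cs g t →
    ∃ p v, IsConstruction Ps p v ∧ MatchesPattern Cs.le g t p v

/-- Vertex-wise matching of two same-shape decomposition trees under a common pair of maps. -/
inductive DMatches (le : Set (L × L)) (fv : V → V) (fa : A → A) :
    DTree V A L → DTree V A L → Prop where
  | node (g : PreGraph V A L) (t : V) (p : PreGraph V A L) (v : V)
      (cs ds : List (DTree V A L))
      (hemb : IsEmbedding le g p fv fa) (ht : fv t = v)
      (hlen : cs.length = ds.length)
      (hrec : ∀ (i : ℕ) (ci di : DTree V A L), cs[i]? = some ci → ds[i]? = some di →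
          DMatches le fv fa ci di) :
      DMatches le fv fa (.node g t cs) (.node p v ds)

/-- The decomposition `D` matches the (pattern) decomposition `Δ`: there is an arrow-index
preserving isomorphism of trees together with an embedding of `ct(D)` into `ct(Δ)` whose
restriction to each vertex label is an embedding into the corresponding pattern label. -/
def DecompositionMatches (le : Set (L × L)) (D Δ : DTree V A L) : Prop :=
  ∃ fv fa, IsEmbedding le D.ctGraph Δ.ctGraph fv fa ∧ fv D.rootTok = Δ.rootTok ∧
    DMatches le fv fa D Δ

/-! ## Descriptions -/

/-- A description: a set of decompositions of patterns (constructions in the pattern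
space `Ps`). -/
def IsDescriptionOf (Ps : CSpace V A L) (Ds : Set (DTree V A L)) : Prop :=
  ∀ Δ ∈ Ds, ∃ p v, IsConstruction Ps p v ∧ IsDecompositionOf Ps Δ p v

/-- The description `Ds` is complete for `Cs`. -/
def CompleteDescription (Cs : CSpace V A L) (Ds : Set (DTree V A L)) : Prop :=
  ∀ g t, IsConstruction Cs g t →
    ∃ Δ ∈ Ds, ∃ D, IsDecompositionOf Cs D g t ∧ DecompositionMatches Cs.le D Δ

/-- The set of patterns labelling vertices of decompositions in `Ds`. -/
def PatternsOf (Ds : Set (DTree V A L)) : Set (PreGraph V A L × V) :=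
  {pv | ∃ Δ ∈ Ds, LabelOf Δ pv.1 pv.2}

/-- Label-preserving isomorphism of patterns/constructions. -/
def LabelIsomorphic (g : PreGraph V A L) (t : V) (p : PreGraph V A L) (v : V) : Prop :=
  ∃ fv fa, IsEmbedding {q : L × L | q.1 = q.2} g p fv fa ∧ fv t = v

/-- The description `Ds` is compact: finitely many patterns up to label-preserving
isomorphism. -/
def CompactDescription (Ds : Set (DTree V A L)) : Prop :=
  ∃ Reps : Set (PreGraph V A L × V), Reps.Finite ∧
    ∀ pv ∈ PatternsOf Ds, ∃ qw ∈ Reps, LabelIsomorphic pv.1 pv.2 qw.1 qw.2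

/-! ## Transformation constraints and structural transformations -/

/-- A transformation-constraint-shaped triple: two patterns (or constructions) together with
a set of patterns (or constructions). -/
structure TConstraint (V A L : Type*) where
  pa : PreGraph V A L
  ca : V
  pb : PreGraph V A L
  cb : V
  Pc : Set (PreGraph V A L × V)

/-- The union of the graphs of a set of patterns. -/
def pGraph (P : Set (PreGraph V A L × V)) : PreGraph V A L :=
  ⟨{x | ∃ pv ∈ P, x ∈ pv.1.Tk}, {x | ∃ pv ∈ P, x ∈ pv.1.Cf},
   {a | ∃ pv ∈ P, a ∈ pv.1.Arr}, {q | ∃ pv ∈ P, q ∈ pv.1.inc},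
   {q | ∃ pv ∈ P, q ∈ pv.1.ia}, {q | ∃ pv ∈ P, q ∈ pv.1.tl},
   {q | ∃ pv ∈ P, q ∈ pv.1.cl}⟩

/-- A respectful embedding of the set of patterns `P` into the set of patterns `P'`. -/
def RespectfulEmbedding (le : Set (L × L)) (P P' : Set (PreGraph V A L × V))
    (fv : V → V) (fa : A → A) : Prop :=
  IsEmbedding le (pGraph P) (pGraph P') fv fa ∧
  ∀ pv ∈ P, ∃ qw ∈ P', IsEmbedding le pv.1 qw.1 fv fa ∧ fv pv.2 = qw.2

/-- Satisfaction of one transformation-constraint-shaped triple by another: embeddings of the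
first two components, a respectful embedding of the third, whose common underlying maps give
an isomorphism of the unions of the graphs. -/
def TCSatisfies (le : Set (L × L)) (s s' : TConstraint V A L) : Prop :=
  ∃ fv fa,
    IsEmbedding le s.pa s'.pa fv fa ∧ fv s.ca = s'.ca ∧
    IsEmbedding le s.pb s'.pb fv fa ∧ fv s.cb = s'.cb ∧
    RespectfulEmbedding le s.Pc s'.Pc fv fa ∧
    IsEmbedding le ((s.pa ∪ s.pb) ∪ pGraph s.Pc) ((s'.pa ∪ s'.pb) ∪ pGraph s'.Pc) fv fa

/-- A transformation constraint for an encoding described by `(Ds, Ds', P'')`. -/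
def IsTransformationConstraint (Ds Ds' : Set (DTree V A L))
    (P'' : Set (PreGraph V A L × V)) (s : TConstraint V A L) : Prop :=
  (s.pa, s.ca) ∈ PatternsOf Ds ∧ (s.pb, s.cb) ∈ PatternsOf Ds' ∧ s.Pc ⊆ P''

/-- A constraint assignment for `Δ` and `Δ'`: a partial function (modelled with `Option`) on
pairs of vertices (paths) whose values are transformation constraints from `S0` matched by the
corresponding labels. -/
def IsConstraintAssignment (leR leR' : Set (L × L)) (S0 : Set (TConstraint V A L))
    (Δ Δ' : DTree V A L) (Lm : List ℕ → List ℕ → Option (TConstraint V A L)) : Prop :=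
  ∀ pi pi' s, Lm pi pi' = some s → s ∈ S0 ∧
    (∃ δ, subtreeAt pi Δ = some δ ∧
        MatchesPattern leR δ.rootGraph δ.rootTok s.pa s.ca) ∧
    (∃ δ', subtreeAt pi' Δ' = some δ' ∧
        MatchesPattern leR' δ'.rootGraph δ'.rootTok s.pb s.cb)

/-- The constraint assignment `Lm` is satisfied by the pair of decompositions `(D, D')`
(whose vertices correspond, via the shape-preserving matchings, to those of `Δ`, `Δ'`). -/
def LSatisfiedBy (leI : Set (L × L)) (Ip : CSpace V A L)
    (Lm : List ℕ → List ℕ → Option (TConstraint V A L)) (D D' : DTree V A L) : Prop :=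
  ∀ pi pi' s d d', Lm pi pi' = some s →
    subtreeAt pi D = some d → subtreeAt pi' D' = some d' →
    ∃ Cset : Set (PreGraph V A L × V),
      (∀ pv ∈ Cset, IsConstruction Ip pv.1 pv.2) ∧
      TCSatisfies leI ⟨d.rootGraph, d.rootTok, d'.rootGraph, d'.rootTok, Cset⟩ s

/-- `(g', t')` is a structural `L`-transformation of `(g, t)` (with respect to the pattern
decompositions `Δ`, `Δ'` for the universal spaces `Ru`, `Ru'` and the inter-property
identification space `Ip`). -/
def IsStructuralLTransformation (Ru Ru' Ip : CSpace V A L) (Δ Δ' : DTree V A L)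
    (Lm : List ℕ → List ℕ → Option (TConstraint V A L))
    (g : PreGraph V A L) (t : V) (g' : PreGraph V A L) (t' : V) : Prop :=
  (∃ D, IsDecompositionOf Ru D g t ∧ DecompositionMatches Ru.le D Δ) ∧
  (∃ D', IsDecompositionOf Ru' D' g' t' ∧ DecompositionMatches Ru'.le D' Δ') ∧
  ∀ D D', IsDecompositionOf Ru D g t → DecompositionMatches Ru.le D Δ →
    IsDecompositionOf Ru' D' g' t' → DecompositionMatches Ru'.le D' Δ' →
    LSatisfiedBy Ip.le Ip Lm D D'

/-- Partial satisfaction: the constraint is only checked at vertices of the pattern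
decomposition `Δh` whose label is already a construction in `Ru'`. -/
def LPartialSatisfiedBy (leI : Set (L × L)) (Ip Ru' : CSpace V A L)
    (Lm : List ℕ → List ℕ → Option (TConstraint V A L)) (D Δh : DTree V A L) : Prop :=
  ∀ pi pi' s d δh, Lm pi pi' = some s →
    subtreeAt pi D = some d → subtreeAt pi' Δh = some δh →
    IsConstructionIn Ru' δh.rootGraph δh.rootTok →
    ∃ Cset : Set (PreGraph V A L × V),
      (∀ pv ∈ Cset, IsConstruction Ip pv.1 pv.2) ∧
      TCSatisfies leI ⟨d.rootGraph, d.rootTok, δh.rootGraph, δh.rootTok, Cset⟩ s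

/-- The pattern `(ph, vh)` (a construction in the pattern space `Ps'` for `Ru'`) is a partial
`L`-transformation of the construction `(g, t)`. -/
def IsPartialLTransformation (Ru Ru' Ip Ps' : CSpace V A L) (Δ Δ' : DTree V A L)
    (Lm : List ℕ → List ℕ → Option (TConstraint V A L))
    (g : PreGraph V A L) (t : V) (ph : PreGraph V A L) (vh : V) : Prop :=
  (∃ D, IsDecompositionOf Ru D g t ∧ DecompositionMatches Ru.le D Δ) ∧
  (∃ Δh, IsDecompositionOf Ps' Δh ph vh ∧ DecompositionMatches Ru'.le Δh Δ') ∧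
  ∀ D Δh, IsDecompositionOf Ru D g t → DecompositionMatches Ru.le D Δ →
    IsDecompositionOf Ps' Δh ph vh → DecompositionMatches Ru'.le Δh Δ' →
    LPartialSatisfiedBy Ip.le Ip Ru' Lm D Δh

/-! ## Validity, soundness, leaf instantiation -/

/-- Validity of `Lm` for `(g, t)` and `(p, v)` at the pair of vertices `(pi, pi')`. -/
def ValidAt (Ru Ru' Ip Ps' : CSpace V A L) (Δ Δ' : DTree V A L)
    (Lm : List ℕ → List ℕ → Option (TConstraint V A L))
    (g : PreGraph V A L) (t : V) (p : PreGraph V A L) (v : V)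
    (pi pi' : List ℕ) : Prop :=
  ∀ D Δh Dsub Δhsub Δsub Δsub',
    IsDecompositionOf Ru D g t → DecompositionMatches Ru.le D Δ →
    IsDecompositionOf Ps' Δh p v → DecompositionMatches Ru'.le Δh Δ' →
    subtreeAt pi D = some Dsub → subtreeAt pi' Δh = some Δhsub →
    subtreeAt pi Δ = some Δsub → subtreeAt pi' Δ' = some Δsub' →
    IsConstructionIn Ru' Δhsub.ctGraph Δhsub.rootTok →
    IsStructuralLTransformation Ru Ru' Ip Δsub Δsub'
      (fun σ σ' => Lm (pi ++ σ) (pi' ++ σ'))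
      Dsub.ctGraph Dsub.rootTok Δhsub.ctGraph Δhsub.rootTok

/-- Ancestor-validity: validity at every pair of proper descendants-in-the-tree
("ancestors" in the paper's in-tree terminology). -/
def AncestorValidAt (Ru Ru' Ip Ps' : CSpace V A L) (Δ Δ' : DTree V A L)
    (Lm : List ℕ → List ℕ → Option (TConstraint V A L))
    (g : PreGraph V A L) (t : V) (p : PreGraph V A L) (v : V)
    (pi pi' : List ℕ) : Prop :=
  ∀ σ σ' : List ℕ, σ ≠ [] → σ' ≠ [] →
    (∃ d, subtreeAt (pi ++ σ) Δ = some d) → (∃ d', subtreeAt (pi' ++ σ') Δ' = some d') →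
    ValidAt Ru Ru' Ip Ps' Δ Δ' Lm g t p v (pi ++ σ) (pi' ++ σ')

/-- Soundness of a constraint assignment. -/
def SoundAssignment (Ru Ru' Ip Ps' : CSpace V A L) (Δ Δ' : DTree V A L)
    (Lm : List ℕ → List ℕ → Option (TConstraint V A L)) : Prop :=
  ∀ g t, IsConstructionIn Ru g t →
    (∃ D, IsDecompositionOf Ru D g t ∧ DecompositionMatches Ru.le D Δ) →
    ∀ p v, IsConstruction Ps' p v →
      (∃ Δh, IsDecompositionOf Ps' Δh p v ∧ DecompositionMatches Ru'.le Δh Δ') →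
      ∀ pi pi', (∃ d, subtreeAt pi Δ = some d) → (∃ d', subtreeAt pi' Δ' = some d') →
        AncestorValidAt Ru Ru' Ip Ps' Δ Δ' Lm g t p v pi pi' →
        ValidAt Ru Ru' Ip Ps' Δ Δ' Lm g t p v pi pi'

/-- The pattern `(p, v)` leaf-instantiates `Δ'`: it matches `Δ'` and every leaf of its
`Δ'`-canonical decomposition is labelled by a construction in `Ru'`. -/
def LeafInstantiates (Ru' Ps' : CSpace V A L) (Δ' : DTree V A L)
    (p : PreGraph V A L) (v : V) : Prop :=
  (∃ Δh, IsDecompositionOf Ps' Δh p v ∧ DecompositionMatches Ru'.le Δh Δ') ∧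
  ∀ Δh, IsDecompositionOf Ps' Δh p v → DecompositionMatches Ru'.le Δh Δ' →
    ∀ pi δh, subtreeAt pi Δh = some δh → δh.kids = [] →
      IsConstructionIn Ru' δh.rootGraph δh.rootTok

/-- A complete extension of a pattern `(p, v)` that leaf-instantiates `Δ'`. -/
def CompleteExtension (Ru' Ps' : CSpace V A L) (Δ' : DTree V A L)
    (p : PreGraph V A L) (v : V) (g' : PreGraph V A L) (t' : V) : Prop :=
  IsConstructionIn Ru' g' t' ∧
  ∃ fv fa, IsEmbedding Ru'.le g' p fv fa ∧ fv t' = v ∧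
    ∀ Δh, IsDecompositionOf Ps' Δh p v → DecompositionMatches Ru'.le Δh Δ' →
      ∀ pi δh, subtreeAt pi Δh = some δh → δh.kids = [] →
        ∀ x ∈ δh.rootGraph.Tk, x ∈ g'.Tk ∧ fv x = x

/-- `(g, t)` and `(p, v)` are valid at the leaves of `Δ` and `Δ'`. -/
def ValidAtLeaves (Ru Ru' Ip Ps' : CSpace V A L) (Δ Δ' : DTree V A L)
    (Lm : List ℕ → List ℕ → Option (TConstraint V A L))
    (g : PreGraph V A L) (t : V) (p : PreGraph V A L) (v : V) : Prop :=
  ∀ pi pi' δ δ', subtreeAt pi Δ = some δ → subtreeAt pi' Δ' = some δ' →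
    δ.kids = [] → δ'.kids = [] →
    ValidAt Ru Ru' Ip Ps' Δ Δ' Lm g t p v pi pi'

/-!
By induction along the recursion of `TES`, `TES(tr)` lists exactly the trails `e` for which
`e ⊕ tr` is a well-formed non-extendable trail. If `tr` is extendable by the arrow `a` out of the
configurator `u`, such an `e` must end with `[aᵢ, a]` for an incoming arrow `aᵢ` of `u`: since
`source(tr)` is a token, uni-structuredness forces the last arrow of `e` to be `a`, and since
`source(e)` is a token while `u` is not, one more arrow of `e` enters `u`. Conversely
`aᵢ :: a :: tr` is again a trail, because `a` is the only arrow leaving `u` and a trail ending in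
a token leaves every configurator it enters.
-/

theorem _root_.List.mem_flatten_zipWith {α β γ : Type*} {f : α → β → List γ} {l₁ : List α}
    {l₂ : List β} {x : γ} :
    x ∈ (List.zipWith f l₁ l₂).flatten ↔
      ∃ (i : ℕ) (a : α) (b : β), l₁[i]? = some a ∧ l₂[i]? = some b ∧ x ∈ f a b := by
  simp only [List.mem_flatten, List.mem_iff_getElem? (l := List.zipWith f l₁ l₂),
    List.getElem?_zipWith]
  constructor
  · rintro ⟨_, ⟨i, hi⟩, hx⟩
    cases ha : l₁[i]? <;> cases hb : l₂[i]? <;> simp only [ha, hb, reduceCtorEq,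
      Option.some.injEq] at hi
    exact ⟨i, _, _, ha, hb, hi ▸ hx⟩
  · rintro ⟨i, a, b, ha, hb, hx⟩
    exact ⟨f a b, ⟨i, by simp [ha, hb]⟩, hx⟩

section TrailExtension

variable {g : PreGraph V A L}

theorem IsGraph.mem_arr_of_inc (hg : IsGraph g) {a : A} {p : V × V} (h : (a, p) ∈ g.inc) :
    a ∈ g.Arr :=
  hg.2.1.1 _ h

theorem IsGraph.inc_unique (hg : IsGraph g) {a : A} {p q : V × V} (hp : (a, p) ∈ g.inc)
    (hq : (a, q) ∈ g.inc) : p = q := by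
  obtain ⟨_, -, huniq⟩ := hg.2.1.2 a (hg.mem_arr_of_inc hp)
  exact (huniq p hp).trans (huniq q hq).symm

theorem IsGraph.not_mem_cf_of_mem_tk (hg : IsGraph g) {v : V} (hv : v ∈ g.Tk) : v ∉ g.Cf :=
  Set.disjoint_left.mp hg.1 hv

theorem IsGraph.src_mem_cf_of_tgt_mem_tk (hg : IsGraph g) {a : A} {v w : V}
    (h : (a, (v, w)) ∈ g.inc) (hw : w ∈ g.Tk) : v ∈ g.Cf := by
  rcases hg.2.2.1 a v w h with ⟨-, hw'⟩ | ⟨hv, -⟩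
  exacts [absurd hw' (hg.not_mem_cf_of_mem_tk hw), hv]

theorem IsGraph.src_mem_tk_of_tgt_mem_cf (hg : IsGraph g) {a : A} {v w : V}
    (h : (a, (v, w)) ∈ g.inc) (hw : w ∈ g.Cf) : v ∈ g.Tk := by
  rcases hg.2.2.1 a v w h with ⟨hv, -⟩ | ⟨-, hw'⟩
  exacts [hv, absurd hw (hg.not_mem_cf_of_mem_tk hw')]

theorem IsStructureGraph.out_unique {Ty C : Set L} {le : Set (L × L)}
    {sig : Set (L × (List L × L))} (hg : IsStructureGraph Ty le C sig g) {u w w' : V} {a c : A}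
    (hu : u ∈ g.Cf) (ha : (a, (u, w)) ∈ g.inc) (hc : (c, (u, w')) ∈ g.inc) : a = c := by
  obtain ⟨_, _, _, -, -, -, hconf⟩ := hg.2.2 u hu
  obtain ⟨-, -, -, -, ⟨a₀, -, huniq⟩, -⟩ := hconf
  have hout : ∀ {b : A} {x : V}, (b, (u, x)) ∈ g.inc →
      b ∈ (g.Nh u).Arr ∧ ∃ x, (b, (u, x)) ∈ (g.Nh u).inc := fun {b x} hb =>
    have hinc : b ∈ g.incidentArrows u := ⟨hg.1.mem_arr_of_inc hb, x, Or.inr hb⟩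
    ⟨⟨hinc.1, hinc⟩, x, hb, hinc⟩
  exact (huniq a (hout ha)).trans (huniq c (hout hc)).symm

theorem chainIn_append {l₁ l₂ : List A} {s t : V} :
    ChainIn g (l₁ ++ l₂) s t ↔ ∃ m, ChainIn g l₁ s m ∧ ChainIn g l₂ m t := by
  induction l₁ generalizing s with
  | nil => simp [ChainIn]
  | cons a l ih => simp only [List.cons_append, ChainIn, ih]; aesop

theorem chainIn_concat {l : List A} {b : A} {s t : V} :
    ChainIn g (l ++ [b]) s t ↔ ∃ m, ChainIn g l s m ∧ b ∈ g.Arr ∧ (b, (m, t)) ∈ g.inc := by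
  simp [chainIn_append, ChainIn]

theorem ChainIn.exists_out_of_mem (hg : IsGraph g) {l : List A} {s t w u : V} {b : A}
    (h : ChainIn g l s t) (ht : t ∈ g.Tk) (hb : b ∈ l) (hbu : (b, (w, u)) ∈ g.inc)
    (hu : u ∈ g.Cf) : ∃ c ∈ l, ∃ x, (c, (u, x)) ∈ g.inc := by
  obtain ⟨l₁, l₂, rfl⟩ := List.append_of_mem hb
  obtain ⟨m, -, -, m', hbm, hl₂⟩ := chainIn_append.mp h
  obtain ⟨-, rfl⟩ := Prod.mk.inj (hg.inc_unique hbm hbu)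
  cases l₂ with
  | nil => exact absurd (hl₂ ▸ ht) (hg.not_mem_cf_of_mem_tk · hu)
  | cons c l₃ =>
    obtain ⟨-, x, hcx, -⟩ := hl₂
    exact ⟨c, by simp, x, hcx⟩

theorem isTrailIn_and_wellFormed_cons_cons {Ty C : Set L} {le : Set (L × L)}
    {sig : Set (L × (List L × L))} (hg : IsStructureGraph Ty le C sig g) {tr : Trail V A}
    (htr : IsTrailIn g tr) (hwf : WellFormed g tr) {a aᵢ : A} {u sᵢ : V} (ha : (a, (u, tr.src)) ∈ g.inc)
    (ha' : a ∉ tr.arrows) (haᵢ : (aᵢ, (sᵢ, u)) ∈ g.inc) :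
    IsTrailIn g ⟨aᵢ :: a :: tr.arrows, sᵢ, tr.tgt⟩ ∧
      WellFormed g ⟨aᵢ :: a :: tr.arrows, sᵢ, tr.tgt⟩ := by
  have hu : u ∈ g.Cf := hg.1.src_mem_cf_of_tgt_mem_tk ha hwf.1
  have hsᵢ : sᵢ ∈ g.Tk := hg.1.src_mem_tk_of_tgt_mem_cf haᵢ hu
  have hne : aᵢ ≠ a := by
    rintro rfl
    obtain ⟨-, rfl⟩ := Prod.mk.inj (hg.1.inc_unique haᵢ ha)
    exact hg.1.not_mem_cf_of_mem_tk hwf.1 hu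
  have hnmem : aᵢ ∉ tr.arrows := fun hmem => by
    obtain ⟨c, hc, _, hcu⟩ := htr.2.1.exists_out_of_mem hg.1 hwf.2 hmem haᵢ hu
    exact ha' (hg.out_unique hu ha hcu ▸ hc)
  refine ⟨⟨?_, ?_, Or.inl hsᵢ, Or.inl hwf.2⟩, hsᵢ, hwf.2⟩
  · simp [hne, hnmem, ha', htr.1]
  · exact ⟨hg.1.mem_arr_of_inc haᵢ, u, haᵢ, hg.1.mem_arr_of_inc ha, tr.src, ha, htr.2.1⟩

/-- For a well-formed trail `tr`: `e ⊕ tr` is a well-formed non-extendable trail. These are the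
trails that `TES(tr)` lists. -/
def IsMaximalPrefix (g : PreGraph V A L) (e tr : Trail V A) : Prop :=
  e.tgt = tr.src ∧ e.src ∈ g.Tk ∧ (e.arrows ++ tr.arrows).Nodup ∧
    ChainIn g e.arrows e.src tr.src ∧ NonExtendable g (e.append tr)

theorem isMaximalPrefix_iff_of_nonExtendable {tr e : Trail V A} (htr : IsTrailIn g tr)
    (hwf : WellFormed g tr) (hnx : NonExtendable g tr) :
    IsMaximalPrefix g e tr ↔ e = Trail.nil tr.src := by
  constructor
  · rintro ⟨htgt, -, hnd, hch, -⟩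
    rcases e with ⟨es, s, t'⟩
    obtain rfl : t' = tr.src := htgt
    rcases List.eq_nil_or_concat' es with rfl | ⟨es', b, rfl⟩
    · obtain rfl : s = tr.src := hch
      rfl
    · obtain ⟨m, -, hb, hbm⟩ := chainIn_concat.mp hch
      have hb' : b ∉ tr.arrows := fun hb' => (List.nodup_append.mp hnd).2.2 b (by simp) b hb' rfl
      exact (hnx ⟨b, hb, hb', m, hbm⟩).elim
  · rintro rfl
    have hnil : (Trail.nil tr.src).append tr = tr := rfl
    exact ⟨rfl, hwf.1, htr.1, rfl, hnil ▸ hnx⟩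

theorem isMaximalPrefix_iff_of_extendableBy (hg : IsGraph g) (huni : UniStructured g)
    {tr e : Trail V A} (hwf : WellFormed g tr) {a : A} {u : V} (ha : (a, (u, tr.src)) ∈ g.inc)
    (ha' : a ∉ tr.arrows) :
    IsMaximalPrefix g e tr ↔ ∃ aᵢ sᵢ e', (aᵢ, (sᵢ, u)) ∈ g.inc ∧
      IsMaximalPrefix g e' ⟨aᵢ :: a :: tr.arrows, sᵢ, tr.tgt⟩ ∧
      e = ⟨e'.arrows ++ [aᵢ, a], e'.src, tr.src⟩ := by
  constructor
  · rintro ⟨htgt, hsrc, hnd, hch, hnx⟩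
    rcases e with ⟨es, s, t'⟩
    obtain rfl : t' = tr.src := htgt
    rcases List.eq_nil_or_concat' es with rfl | ⟨es₁, b, rfl⟩
    · obtain rfl : s = tr.src := hch
      exact (hnx ⟨a, hg.mem_arr_of_inc ha, ha', u, ha⟩).elim
    obtain ⟨m, hch₁, hb, hbm⟩ := chainIn_concat.mp hch
    obtain rfl : b = a := huni _ hwf.1 b hb a (hg.mem_arr_of_inc ha) ⟨m, hbm⟩ ⟨u, ha⟩
    obtain ⟨rfl, -⟩ := Prod.mk.inj (hg.inc_unique hbm ha)
    rcases List.eq_nil_or_concat' es₁ with rfl | ⟨es₂, aᵢ, rfl⟩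
    · obtain rfl : s = m := hch₁
      exact absurd (hg.src_mem_cf_of_tgt_mem_tk ha hwf.1) (hg.not_mem_cf_of_mem_tk hsrc)
    obtain ⟨sᵢ, hch₂, -, haᵢ⟩ := chainIn_concat.mp hch₁
    exact ⟨aᵢ, sᵢ, ⟨es₂, s, sᵢ⟩, haᵢ,
      ⟨rfl, hsrc, by simpa using hnd, hch₂, by simpa [Trail.append] using hnx⟩, by simp⟩
  · rintro ⟨aᵢ, sᵢ, e', haᵢ, ⟨-, hsrc, hnd, hch, hnx⟩, rfl⟩
    refine ⟨rfl, hsrc, by simpa using hnd, ?_, by simpa [Trail.append] using hnx⟩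
    exact chainIn_append.mpr
      ⟨sᵢ, hch, hg.mem_arr_of_inc haᵢ, u, haᵢ, hg.mem_arr_of_inc ha, tr.src, ha, rfl⟩

theorem TES.mem_iff_isMaximalPrefix {Ty C : Set L} {le : Set (L × L)}
    {sig : Set (L × (List L × L))} (hg : IsStructureGraph Ty le C sig g) (huni : UniStructured g)
    {tr : Trail V A} {S : List (Trail V A)} (h : TES g tr S) (htr : IsTrailIn g tr)
    (hwf : WellFormed g tr) (e : Trail V A) : e ∈ S ↔ IsMaximalPrefix g e tr := by
  induction h generalizing e with
  | nonext tr hnx =>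
    exact List.mem_singleton.trans (isMaximalPrefix_iff_of_nonExtendable htr hwf hnx).symm
  | ext tr a u ars Ss hext ha hars hlen _ ih =>
    have ih' : ∀ i aᵢ sᵢ Sᵢ, ars[i]? = some aᵢ → Ss[i]? = some Sᵢ → (aᵢ, (sᵢ, u)) ∈ g.inc →
        ∀ e', e' ∈ Sᵢ ↔ IsMaximalPrefix g e' ⟨aᵢ :: a :: tr.arrows, sᵢ, tr.tgt⟩ :=
      fun i aᵢ sᵢ Sᵢ h₁ h₂ haᵢ =>
        have ⟨htr', hwf'⟩ := isTrailIn_and_wellFormed_cons_cons hg htr hwf ha hext.2.1 haᵢ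
        ih i aᵢ sᵢ Sᵢ h₁ h₂ haᵢ htr' hwf'
    rw [List.mem_flatten_zipWith, isMaximalPrefix_iff_of_extendableBy hg.1 huni hwf ha hext.2.1]
    constructor
    · rintro ⟨i, aᵢ, Sᵢ, h₁, h₂, hmem⟩
      obtain ⟨e', he', rfl⟩ := List.mem_map.mp hmem
      obtain ⟨sᵢ, haᵢ⟩ := ((hars.2.1 aᵢ).mp (List.mem_of_getElem? h₁)).2
      exact ⟨aᵢ, sᵢ, e', haᵢ, (ih' i aᵢ sᵢ Sᵢ h₁ h₂ haᵢ e').mp he', rfl⟩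
    · rintro ⟨aᵢ, sᵢ, e', haᵢ, he', rfl⟩
      obtain ⟨i, h₁⟩ := List.mem_iff_getElem?.mp
        ((hars.2.1 aᵢ).mpr ⟨hg.1.mem_arr_of_inc haᵢ, sᵢ, haᵢ⟩)
      have hi : i < Ss.length := hlen ▸ (List.getElem?_eq_some_iff.mp h₁).1
      have h₂ := List.getElem?_eq_getElem hi
      exact ⟨i, aᵢ, Ss[i], h₁, h₂,
        List.mem_map.mpr ⟨e', (ih' i aᵢ sᵢ _ h₁ h₂ haᵢ e').mpr he', rfl⟩⟩

theorem isMaximalPrefix_nil_iff {e : Trail V A} {t : V} (ht : t ∈ g.Tk) :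
    IsMaximalPrefix g e (Trail.nil t) ↔
      IsTrailIn g e ∧ WellFormed g e ∧ NonExtendable g e ∧ e.tgt = t := by
  rcases e with ⟨es, s, t'⟩
  simp only [IsMaximalPrefix, IsTrailIn, WellFormed, Trail.nil, Trail.append, List.append_nil]
  constructor
  · rintro ⟨rfl, hs, hnd, hch, hnx⟩
    exact ⟨⟨hnd, hch, Or.inl hs, Or.inl ht⟩, ⟨hs, ht⟩, hnx, rfl⟩
  · rintro ⟨⟨hnd, hch, -, -⟩, ⟨hs, -⟩, hnx, rfl⟩
    exact ⟨rfl, hs, hnd, hch, hnx⟩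

end TrailExtension

theorem cts_all_and_only_general {V A L : Type*}
    (Cs : CSpace V A L)
    (g : PreGraph V A L) (t : V) (hc : IsConstruction Cs g t)
    (S : List (Trail V A)) (hCTS : TES g (Trail.nil t) S) :
    (∀ tr' ∈ S,
        IsTrailIn g tr' ∧ WellFormed g tr' ∧ NonExtendable g tr' ∧ tr'.tgt = t) ∧
    (∀ tr' : Trail V A, IsTrailIn g tr' → WellFormed g tr' → NonExtendable g tr' →
        tr'.tgt = t → tr' ∈ S) := by
  obtain ⟨-, hg, -, -, -, huni, ht, -⟩ := hc
  have hnil : IsTrailIn g (Trail.nil t) ∧ WellFormed g (Trail.nil t) :=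
    ⟨⟨List.nodup_nil, rfl, Or.inl ht, Or.inl ht⟩, ht, ht⟩
  have hS (e : Trail V A) :
      e ∈ S ↔ IsTrailIn g e ∧ WellFormed g e ∧ NonExtendable g e ∧ e.tgt = t :=
    (hCTS.mem_iff_isMaximalPrefix hg huni hnil.1 hnil.2 e).trans (isMaximalPrefix_nil_iff ht)
  exact ⟨fun e he => (hS e).mp he, fun e h₁ h₂ h₃ h₄ => (hS e).mpr ⟨h₁, h₂, h₃, h₄⟩⟩

/-- the complete trail sequence contains all and only the well-formed
non-extendable trails targeting the construct. -/
theorem cts_all_and_only {V A L : Type*}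
    (Cs : CSpace V A L) (hCs : IsCSpace Cs)
    (g : PreGraph V A L) (t : V) (hc : IsConstruction Cs g t)
    (S : List (Trail V A)) (hCTS : TES g (Trail.nil t) S) :
    (∀ tr' ∈ S,
        IsTrailIn g tr' ∧ WellFormed g tr' ∧ NonExtendable g tr' ∧ tr'.tgt = t) ∧
    (∀ tr' : Trail V A, IsTrailIn g tr' → WellFormed g tr' → NonExtendable g tr' →
        tr'.tgt = t → tr' ∈ S) :=
  cts_all_and_only_general Cs g t hc S hCTS

end RST
end

section
/- Let (g, t) be a construction with split ((g′, t), ics). Writing CTS(g′, t) = [tr1,…,trn] and ics = [ic(tr1),…,ic(trn)], it holds that CTS(g, t) = (CTS(ic(tr1)) ◁ tr1) ⊕ ⋯ ⊕ (CTS(ic(trn)) ◁ trn). -/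
namespace RST

variable {V A L : Type*}

/-!
Trail extension sequences are unique in a uni-structured graph, so it suffices to show that the
right-hand side satisfies the recursion defining `CTS(g, t)`. First, `CTS(ic(trᵢ)) = TES(trᵢ)`:
the recursion computing `TES(trᵢ)` only uses arrows of its own trails and never revisits the
arrows of `trᵢ`, so it runs unchanged inside `icg(trᵢ)`. Second, the recursion in `g` passes
through the recursion in the generator `g'` (a configurator of `g'` keeps all its input arrows,
their number being fixed by its constructor's signature) and then continues from each trail
`trᵢ` of `CTS(g', t)` with `TES(trᵢ)`, which produces `⊕ᵢ TES(trᵢ) ◁ trᵢ`.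
-/

theorem mem_flatten_zipWith_map {α β γ : Type*} {F : α → β → γ} {as : List α}
    {ls : List (List β)} {z : γ} :
    z ∈ (List.zipWith (fun a l => l.map (F a)) as ls).flatten ↔
      ∃ (i : ℕ) (a : α) (l : List β) (y : β),
        as[i]? = some a ∧ ls[i]? = some l ∧ y ∈ l ∧ F a y = z := by
  simp only [List.mem_flatten, List.mem_iff_getElem? (l := List.zipWith _ _ _),
    List.getElem?_zipWith_eq_some]
  constructor
  · rintro ⟨_, ⟨i, a, l, ha, hl, rfl⟩, hz⟩
    obtain ⟨y, hy, rfl⟩ := List.mem_map.1 hz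
    exact ⟨i, a, l, y, ha, hl, hy, rfl⟩
  · rintro ⟨i, a, l, y, ha, hl, hy, rfl⟩
    exact ⟨_, ⟨i, a, l, ha, hl, rfl⟩, List.mem_map_of_mem hy⟩

theorem zipWith_zipWith_self {α β γ δ : Type*} (f : α → γ → δ) (h : α → β → γ) :
    ∀ (as : List α) (bs : List β),
      List.zipWith f as (List.zipWith h as bs) = List.zipWith (fun a b => f a (h a b)) as bs
  | [], _ => rfl
  | _ :: _, [] => rfl
  | _ :: as, _ :: bs => congrArg _ (zipWith_zipWith_self f h as bs)

theorem eq_map_of_forall_getElem? {α β : Type*} {f : α → β} {l : List α} {m : List β}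
    (hlen : m.length = l.length) (h : ∀ (i : ℕ) x y, l[i]? = some x → m[i]? = some y → y = f x) :
    m = l.map f := by
  refine List.ext_getElem (by simpa using hlen) fun i hm hl => ?_
  simp only [List.getElem_map]
  exact h i _ _ (List.getElem?_eq_getElem (by simpa using hl)) (List.getElem?_eq_getElem hm)

theorem IsFunctionOn.eq {α β : Type*} {R : Set (α × β)} {D : Set α} (h : IsFunctionOn R D)
    {x : α} {y₁ y₂ : β} (h₁ : (x, y₁) ∈ R) (h₂ : (x, y₂) ∈ R) : y₁ = y₂ :=
  (h.2 x (h.1 _ h₁)).unique h₁ h₂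

theorem IsFunctionOn.restrict {α β : Type*} {R : Set (α × β)} {D : Set α} (h : IsFunctionOn R D)
    (s : Set α) : IsFunctionOn {q | q ∈ R ∧ q.1 ∈ s} (D ∩ s) := by
  refine ⟨fun q hq => ⟨h.1 q hq.1, hq.2⟩, fun x hx => ?_⟩
  obtain ⟨y, hy, huniq⟩ := h.2 x hx.1
  exact ⟨y, ⟨hy, hx.2⟩, fun y' hy' => huniq y' hy'.1⟩

namespace IsGraph

variable {g : PreGraph V A L}

theorem arr_of_inc (hG : IsGraph g) {a : A} {p : V × V} (h : (a, p) ∈ g.inc) : a ∈ g.Arr :=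
  hG.2.1.1 _ h

theorem inc_eq (hG : IsGraph g) {a : A} {p q : V × V} (h₁ : (a, p) ∈ g.inc)
    (h₂ : (a, q) ∈ g.inc) : p = q :=
  hG.2.1.eq h₁ h₂

theorem cf_of_inc_tk (hG : IsGraph g) {a : A} {u x : V} (h : (a, (u, x)) ∈ g.inc)
    (hx : x ∈ g.Tk) : u ∈ g.Cf := by
  rcases hG.2.2.1 a u x h with ⟨-, hxc⟩ | ⟨huc, -⟩
  · exact absurd hx (Set.disjoint_right.1 hG.1 hxc)
  · exact huc

theorem tk_of_inc_cf (hG : IsGraph g) {b : A} {s u : V} (h : (b, (s, u)) ∈ g.inc)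
    (hu : u ∈ g.Cf) : s ∈ g.Tk := by
  rcases hG.2.2.1 b s u h with ⟨hs, -⟩ | ⟨-, hut⟩
  · exact hs
  · exact absurd hu (Set.disjoint_left.1 hG.1 hut)

theorem restrict (hG : IsGraph g) {Vs : Set V} {As : Set A}
    (hVs : ∀ a ∈ As, ∀ v w, (a, (v, w)) ∈ g.inc → v ∈ Vs ∧ w ∈ Vs) :
    IsGraph (g.restrict Vs As) := by
  refine ⟨hG.1.mono Set.inter_subset_left Set.inter_subset_left, hG.2.1.restrict As,
    fun a v w h => ?_, hG.2.2.2.1.restrict As, hG.2.2.2.2.1.restrict Vs,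
    hG.2.2.2.2.2.restrict Vs⟩
  obtain ⟨hv, hw⟩ := hVs a h.2 v w h.1
  rcases hG.2.2.1 a v w h.1 with ⟨h₁, h₂⟩ | ⟨h₁, h₂⟩
  · exact Or.inl ⟨⟨h₁, hv⟩, h₂, hw⟩
  · exact Or.inr ⟨⟨h₁, hv⟩, h₂, hw⟩

theorem trGraph (hG : IsGraph g) (TR : List (Trail V A)) : IsGraph (trGraph g TR) :=
  hG.restrict fun a ha v w h => ⟨Or.inl ⟨a, ha, w, Or.inl h⟩, Or.inl ⟨a, ha, v, Or.inr h⟩⟩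

end IsGraph

theorem UniStructured.restrict {g : PreGraph V A L} (hU : UniStructured g) (Vs : Set V)
    (As : Set A) : UniStructured (g.restrict Vs As) :=
  fun x hx a ha b hb ⟨w₁, hw₁, _⟩ ⟨w₂, hw₂, _⟩ => hU x hx.1 a ha.1 b hb.1 ⟨w₁, hw₁⟩ ⟨w₂, hw₂⟩

theorem ChainIn.mono {g g' : PreGraph V A L} (hsub : g'.Subgraph g) :
    ∀ {l : List A} {s t : V}, ChainIn g' l s t → ChainIn g l s t
  | [], _, _, h => h
  | _ :: _, _, _, ⟨ha, m, hm, hch⟩ => ⟨hsub.2.2.1 ha, m, hsub.2.2.2.1 hm, ChainIn.mono hsub hch⟩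

theorem IsTrailIn.mono {g g' : PreGraph V A L} (hsub : g'.Subgraph g) {tr : Trail V A}
    (h : IsTrailIn g' tr) : IsTrailIn g tr :=
  ⟨h.1, h.2.1.mono hsub, Set.union_subset_union hsub.1 hsub.2.1 h.2.2.1,
    Set.union_subset_union hsub.1 hsub.2.1 h.2.2.2⟩

theorem WellFormed.mono {g g' : PreGraph V A L} (hsub : g'.Subgraph g) {tr : Trail V A}
    (h : WellFormed g' tr) : WellFormed g tr :=
  ⟨hsub.1 h.1, hsub.1 h.2⟩

theorem Trail.append_nil_of_tgt {e : Trail V A} {v : V} (h : e.tgt = v) :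
    e.append (Trail.nil v) = e := by
  subst h
  simp [Trail.append, Trail.nil]

theorem rprod_nil {S : List (Trail V A)} {v : V} (h : ∀ e ∈ S, e.tgt = v) :
    rprod S (Trail.nil v) = S :=
  (List.map_congr_left fun e he => Trail.append_nil_of_tgt (h e he)).trans (List.map_id S)

theorem rprod_extend (S : List (Trail V A)) (x : Trail V A) (ai a : A) (v : V) :
    rprod S ⟨x.arrows ++ [ai, a], x.src, v⟩ =
      (rprod S x).map fun e => ⟨e.arrows ++ [ai, a], e.src, v⟩ := by
  simp [rprod, Trail.append]

theorem InArrowSeq.getElem?_eq {g : PreGraph V A L} (hia : IsFunctionOn g.ia g.Arr) {u : V}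
    {l : List A} (h : InArrowSeq g u l) {b : A} {n : ℕ} (hb : b ∈ l) (hbn : (b, n + 1) ∈ g.ia) :
    l[n]? = some b := by
  obtain ⟨k, hk⟩ := List.mem_iff_getElem?.1 hb
  obtain rfl : n = k := Nat.succ_injective (hia.eq hbn (h.2.2 k b hk))
  exact hk

theorem InArrowSeq.unique {g : PreGraph V A L} (hia : IsFunctionOn g.ia g.Arr) {u : V}
    {l₁ l₂ : List A} (h₁ : InArrowSeq g u l₁) (h₂ : InArrowSeq g u l₂) : l₁ = l₂ := by
  have key : ∀ {l l' : List A}, InArrowSeq g u l → InArrowSeq g u l' →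
      ∀ (n : ℕ) (b : A), l[n]? = some b → l'[n]? = some b := fun h h' n b hb =>
    h'.getElem?_eq hia ((h'.2.1 b).2 ((h.2.1 b).1 (List.mem_of_getElem? hb))) (h.2.2 n b hb)
  exact List.ext_getElem? fun n => Option.ext fun b => ⟨key h₁ h₂ n b, key h₂ h₁ n b⟩

theorem InArrowSeq.perm {g : PreGraph V A L} {u : V} {l₁ l₂ : List A} (h₁ : InArrowSeq g u l₁)
    (h₂ : InArrowSeq g u l₂) : l₁.Perm l₂ :=
  (List.perm_ext_iff_of_nodup h₁.1 h₂.1).2 fun b => (h₁.2.1 b).trans (h₂.2.1 b).symm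

theorem InArrowSeq.of_subgraph {g g' : PreGraph V A L} (hsub : g'.Subgraph g) {u : V}
    {l l₀ : List A} (h' : InArrowSeq g' u l) (h₀ : InArrowSeq g u l₀)
    (hlen : l₀.length ≤ l.length) : InArrowSeq g u l := by
  have hsubset : l ⊆ l₀ := fun b hb =>
    let ⟨hb, w, hw⟩ := (h'.2.1 b).1 hb
    (h₀.2.1 b).2 ⟨hsub.2.2.1 hb, w, hsub.2.2.2.1 hw⟩
  have hperm : l.Perm l₀ := (h'.1.subperm hsubset).perm_of_length_le hlen
  exact ⟨h'.1, fun b => hperm.mem_iff.trans (h₀.2.1 b),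
    fun i b hb => hsub.2.2.2.2.1 (h'.2.2 i b hb)⟩

theorem InArrowSeq.of_Nh {g : PreGraph V A L} {u : V} {l : List A}
    (h : InArrowSeq (g.Nh u) u l) : InArrowSeq g u l := by
  refine ⟨h.1, fun b => (h.2.1 b).trans ⟨?_, ?_⟩, fun i b hb => (h.2.2 i b hb).1⟩
  · rintro ⟨⟨hb, -⟩, w, hw, -⟩
    exact ⟨hb, w, hw⟩
  · rintro ⟨hb, w, hw⟩
    have hinc : b ∈ g.incidentArrows u := ⟨hb, w, Or.inl hw⟩
    exact ⟨⟨hb, hinc⟩, w, hw, hinc⟩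

namespace IsStructureGraph

variable {Ty : Set L} {le : Set (L × L)} {C : Set L} {sig : Set (L × (List L × L))}
  {g : PreGraph V A L}

theorem exists_inArrowSeq (hSG : IsStructureGraph Ty le C sig g) {u : V} (hu : u ∈ g.Cf) :
    ∃ c ins out, (u, c) ∈ g.cl ∧ (c, (ins, out)) ∈ sig ∧
      ∃ ars, InArrowSeq g u ars ∧ ars.length = ins.length := by
  obtain ⟨c, ins, out, hcl, -, hsig, hcfg⟩ := hSG.2.2 u hu
  obtain ⟨ars, hars, hlen, -⟩ := hcfg.2.2.2.2.2.2
  exact ⟨c, ins, out, hcl, hsig, ars, hars.of_Nh, hlen⟩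

theorem output_unique (hSG : IsStructureGraph Ty le C sig g) {u : V} (hu : u ∈ g.Cf)
    {b b' : A} {x y : V} (hb : (b, (u, x)) ∈ g.inc) (hb' : (b', (u, y)) ∈ g.inc) : b = b' := by
  obtain ⟨c, ins, out, hcl, -, hsig, hcfg⟩ := hSG.2.2 u hu
  obtain ⟨a₀, -, ha₀⟩ := hcfg.2.2.2.2.1
  have hNh : ∀ {d : A} {z : V}, (d, (u, z)) ∈ g.inc →
      d ∈ (g.Nh u).Arr ∧ ∃ w, (d, (u, w)) ∈ (g.Nh u).inc := fun {d z} hd =>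
    have hinc : d ∈ g.incidentArrows u := ⟨hSG.1.arr_of_inc hd, z, Or.inr hd⟩
    ⟨⟨hinc.1, hinc⟩, z, hd, hinc⟩
  rw [ha₀ b (hNh hb), ha₀ b' (hNh hb')]

/-- The signature of the constructor fixes the number of input arrows. -/
theorem inArrowSeq_of_subgraph (hsig : IsFunctionOn sig C) (hSG : IsStructureGraph Ty le C sig g)
    {g' : PreGraph V A L} (hSG' : IsStructureGraph Ty le C sig g') (hsub : g'.Subgraph g)
    {u : V} (hu : u ∈ g'.Cf) {ars : List A} (h : InArrowSeq g' u ars) : InArrowSeq g u ars := by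
  obtain ⟨c, ins, out, hcl, hsig₁, ars₀, hars₀, hlen₀⟩ := hSG.exists_inArrowSeq (hsub.2.1 hu)
  obtain ⟨c', ins', out', hcl', hsig₁', ars₀', hars₀', hlen₀'⟩ := hSG'.exists_inArrowSeq hu
  obtain rfl : c = c' := hSG.1.2.2.2.2.2.eq hcl (hsub.2.2.2.2.2.2 hcl')
  obtain rfl : ins = ins' := congrArg Prod.fst (hsig.eq hsig₁ hsig₁')
  refine h.of_subgraph hsub hars₀ (le_of_eq ?_)
  rw [hlen₀, ← hlen₀', (h.perm hars₀').length_eq]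

end IsStructureGraph

structure IsConstructionGraph (g : PreGraph V A L) : Prop where
  isGraph : IsGraph g
  uniStructured : UniStructured g
  exists_input : ∀ u ∈ g.Cf, ∃ b w, (b, (w, u)) ∈ g.inc
  output_unique : ∀ u ∈ g.Cf, ∀ b b' x y, (b, (u, x)) ∈ g.inc → (b', (u, y)) ∈ g.inc → b = b'

theorem IsConstruction.tok_mem {Cs : CSpace V A L} {g : PreGraph V A L} {t : V}
    (hc : IsConstruction Cs g t) : t ∈ g.Tk :=
  hc.2.2.2.2.2.2.1

theorem IsConstruction.isConstructionGraph {Cs : CSpace V A L} (hCs : IsCSpace Cs)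
    {g : PreGraph V A L} {t : V} (hc : IsConstruction Cs g t) : IsConstructionGraph g := by
  have hSG := hc.2.1
  refine ⟨hSG.1, hc.2.2.2.2.2.1, fun u hu => ?_, fun u hu b b' x y => hSG.output_unique hu⟩
  obtain ⟨c, ins, out, -, hsig, ars, hars, hlen⟩ := hSG.exists_inArrowSeq hu
  obtain ⟨b, hb⟩ := List.exists_mem_of_ne_nil ars fun h =>
    (hCs.2.2.2.1 c ins out hsig).1 (List.eq_nil_of_length_eq_zero (h ▸ hlen).symm)
  obtain ⟨-, w, hw⟩ := (hars.2.1 b).1 hb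
  exact ⟨b, w, hw⟩

/-- Having entered `u`, a chain ending at a token must leave `u` again, and `a` is the only
arrow out of `u`. -/
theorem ChainIn.not_inc_of_output_not_mem {g : PreGraph V A L} (hN : IsConstructionGraph g)
    {u y : V} {a : A} (hu : u ∈ g.Cf) (ha : (a, (u, y)) ∈ g.inc) :
    ∀ {l : List A} {s t : V}, ChainIn g l s t → t ∈ g.Tk → a ∉ l →
      ∀ b ∈ l, ∀ w, (b, (w, u)) ∉ g.inc
  | [], _, _, _, _, _, _, hb, _, _ => nomatch hb
  | c :: rest, _, t, ⟨_, m, hcm, hch⟩, ht, hal, b, hb, w, hbw => by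
    rcases List.mem_cons.1 hb with rfl | hb
    · obtain rfl : m = u := congrArg Prod.snd (hN.isGraph.inc_eq hcm hbw)
      cases rest with
      | nil => exact Set.disjoint_right.1 hN.isGraph.1 ((hch : m = t) ▸ hu) ht
      | cons d rest =>
        obtain ⟨-, m', hdm', -⟩ := hch
        exact hal (hN.output_unique m hu d a m' y hdm' ha ▸ List.mem_cons_of_mem _ (by simp))
    · exact not_inc_of_output_not_mem hN hu ha hch ht (fun h => hal (List.mem_cons_of_mem _ h))
        b hb w hbw

theorem isTrailIn_extend {g : PreGraph V A L} (hN : IsConstructionGraph g) {T : Trail V A}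
    {a ai : A} {u si : V} (hext : ExtendableBy g T a) (hinc : (a, (u, T.src)) ∈ g.inc)
    (hsi : (ai, (si, u)) ∈ g.inc) (htr : IsTrailIn g T) (hwf : WellFormed g T) :
    IsTrailIn g ⟨ai :: a :: T.arrows, si, T.tgt⟩ ∧
      WellFormed g ⟨ai :: a :: T.arrows, si, T.tgt⟩ := by
  have hu : u ∈ g.Cf := hN.isGraph.cf_of_inc_tk hinc hwf.1
  have hsiTk : si ∈ g.Tk := hN.isGraph.tk_of_inc_cf hsi hu
  have hne : ai ≠ a := by
    rintro rfl
    obtain rfl : si = u := congrArg Prod.fst (hN.isGraph.inc_eq hsi hinc)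
    exact Set.disjoint_left.1 hN.isGraph.1 hsiTk hu
  have hfresh : ai ∉ T.arrows := fun hmem =>
    htr.2.1.not_inc_of_output_not_mem hN hu hinc hwf.2 hext.2.1 ai hmem si hsi
  refine ⟨⟨?_, ⟨hN.isGraph.arr_of_inc hsi, u, hsi, hext.1, T.src, hinc, htr.2.1⟩,
    Or.inl hsiTk, htr.2.2.2⟩, hsiTk, hwf.2⟩
  simp only [List.nodup_cons, List.mem_cons, not_or]
  exact ⟨⟨hne, hfresh⟩, hext.2.1, htr.1⟩

theorem extend_append (T x : Trail V A) (ai a : A) (si : V) :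
    (⟨x.arrows ++ [ai, a], x.src, T.src⟩ : Trail V A).append T =
      x.append ⟨ai :: a :: T.arrows, si, T.tgt⟩ := by
  simp [Trail.append]

namespace TES

variable {g : PreGraph V A L} {T : Trail V A} {S : List (Trail V A)}

theorem tgt_eq (h : TES g T S) : ∀ e ∈ S, e.tgt = T.src := by
  cases h with
  | nonext => simp
  | ext =>
    intro e he
    obtain ⟨-, -, -, -, -, -, -, rfl⟩ := mem_flatten_zipWith_map.1 he
    rfl

theorem isTrailIn_append (hN : IsConstructionGraph g) (h : TES g T S) (htr : IsTrailIn g T)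
    (hwf : WellFormed g T) : ∀ e ∈ S, IsTrailIn g (e.append T) ∧ WellFormed g (e.append T) := by
  induction h with
  | nonext tr => simpa using ⟨htr, hwf⟩
  | ext tr a u ars Ss hext hinc hars hlen hrec ih =>
    intro e he
    obtain ⟨i, ai, Si, x, hai, hSi, hx, rfl⟩ := mem_flatten_zipWith_map.1 he
    obtain ⟨-, si, hsi⟩ := (hars.2.1 ai).1 (List.mem_of_getElem? hai)
    obtain ⟨htr', hwf'⟩ := isTrailIn_extend hN hext hinc hsi htr hwf
    rw [extend_append tr x ai a si]
    exact ih i ai si Si hai hSi hsi htr' hwf' x hx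

theorem isTrailIn_of_nil (hN : IsConstructionGraph g) {t : V} (h : TES g (Trail.nil t) S)
    (ht : t ∈ g.Tk) : ∀ tri ∈ S, IsTrailIn g tri ∧ WellFormed g tri := fun tri htri => by
  have := h.isTrailIn_append hN ⟨List.nodup_nil, rfl, Or.inl ht, Or.inl ht⟩ ⟨ht, ht⟩ tri htri
  rwa [Trail.append_nil_of_tgt (v := t) (h.tgt_eq tri htri)] at this

theorem ne_nil (hN : IsConstructionGraph g) (h : TES g T S) (hT : T.src ∈ g.Tk) : S ≠ [] := by
  induction h with
  | nonext => simp
  | ext tr a u ars Ss hext hinc hars hlen hrec ih =>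
    have hu : u ∈ g.Cf := hN.isGraph.cf_of_inc_tk hinc hT
    obtain ⟨b, w, hw⟩ := hN.exists_input u hu
    obtain ⟨i, hb⟩ := List.mem_iff_getElem?.1 ((hars.2.1 b).2 ⟨hN.isGraph.arr_of_inc hw, w, hw⟩)
    have hi : i < Ss.length := hlen ▸ (List.getElem?_eq_some_iff.1 hb).1
    obtain ⟨x, hx⟩ := List.exists_mem_of_ne_nil _
      (ih i b w _ hb (List.getElem?_eq_getElem hi) hw (hN.isGraph.tk_of_inc_cf hw hu))
    exact List.ne_nil_of_mem
      (mem_flatten_zipWith_map.2 ⟨i, b, _, x, hb, List.getElem?_eq_getElem hi, hx, rfl⟩)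

theorem exists_mem_arrows (hN : IsConstructionGraph g) (h : TES g T S) (hT : T.src ∈ g.Tk)
    {a b : A} {u w : V} (hext : ExtendableBy g T a) (hinc : (a, (u, T.src)) ∈ g.inc)
    (hb : (b, (w, u)) ∈ g.inc) : ∃ e ∈ S, b ∈ e.arrows ∧ a ∈ e.arrows := by
  have hne := h.ne_nil hN hT
  cases h with
  | nonext _ hnon => exact absurd ⟨a, hext⟩ hnon
  | ext _ a' u' ars Ss hext' hinc' hars hlen hrec =>
    obtain rfl : a' = a := hN.uniStructured _ hT a' hext'.1 a hext.1 ⟨u', hinc'⟩ ⟨u, hinc⟩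
    obtain rfl : u' = u := congrArg Prod.fst (hN.isGraph.inc_eq hinc' hinc)
    have hu : u' ∈ g.Cf := hN.isGraph.cf_of_inc_tk hinc hT
    obtain ⟨i, hbi⟩ := List.mem_iff_getElem?.1 ((hars.2.1 b).2 ⟨hN.isGraph.arr_of_inc hb, w, hb⟩)
    have hi : i < Ss.length := hlen ▸ (List.getElem?_eq_some_iff.1 hbi).1
    obtain ⟨x, hx⟩ := List.exists_mem_of_ne_nil _
      ((hrec i b w _ hbi (List.getElem?_eq_getElem hi) hb).ne_nil hN
        (hN.isGraph.tk_of_inc_cf hb hu))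
    exact ⟨_, mem_flatten_zipWith_map.2 ⟨i, b, _, x, hbi, List.getElem?_eq_getElem hi, hx, rfl⟩,
      by simp⟩

theorem src_mem_trailVertexSet (hN : IsConstructionGraph g) (h : TES g T S)
    (hT : T.src ∈ g.Tk) : T.src ∈ trailVertexSet g S := by
  cases h with
  | nonext => exact Or.inr ⟨_, List.mem_singleton_self _, rfl, rfl⟩
  | ext _ a u ars Ss hext hinc hars hlen hrec =>
    obtain ⟨b, w, hb⟩ := hN.exists_input u (hN.isGraph.cf_of_inc_tk hinc hT)
    obtain ⟨e, he, -, ha⟩ := (TES.ext T a u ars Ss hext hinc hars hlen hrec).exists_mem_arrows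
      hN hT hext hinc hb
    exact Or.inl ⟨a, ⟨e, he, ha⟩, u, Or.inr hinc⟩

theorem unique (hG : IsGraph g) (hU : UniStructured g) (h : TES g T S) (hT : T.src ∈ g.Tk)
    {S' : List (Trail V A)} (h' : TES g T S') : S = S' := by
  induction h generalizing S' with
  | nonext _ hnon =>
    cases h' with
    | nonext => rfl
    | ext _ a' _ _ _ hext' => exact absurd ⟨a', hext'⟩ hnon
  | ext tr a u ars Ss hext hinc hars hlen hrec ih =>
    cases h' with
    | nonext _ hnon => exact absurd ⟨a, hext⟩ hnon
    | ext _ a' u' ars' Ss' hext' hinc' hars' hlen' hrec' =>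
      obtain rfl : a' = a := hU _ hT a' hext'.1 a hext.1 ⟨u', hinc'⟩ ⟨u, hinc⟩
      obtain rfl : u' = u := congrArg Prod.fst (hG.inc_eq hinc' hinc)
      obtain rfl : ars' = ars := hars'.unique hG.2.2.2.1 hars
      have hu : u' ∈ g.Cf := hG.cf_of_inc_tk hinc hT
      suffices Ss = Ss' by rw [this]
      refine List.ext_getElem (hlen.trans hlen'.symm) fun n h₁ h₂ => ?_
      have hn : ars'[n]? = some ars'[n] := List.getElem?_eq_getElem (hlen ▸ h₁)
      obtain ⟨-, si, hsi⟩ := (hars.2.1 _).1 (List.mem_of_getElem? hn)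
      exact ih n _ si _ hn (List.getElem?_eq_getElem h₁) hsi (hG.tk_of_inc_cf hsi hu)
        (hrec' n _ si _ hn (List.getElem?_eq_getElem h₂) hsi)

theorem restrict_trGraph (hN : IsConstructionGraph g) {Sfull : List (Trail V A)}
    (h : TES g T S) (htr : IsTrailIn g T) (hwf : WellFormed g T) {P W : List A}
    (hPW : T.arrows = P ++ W) (hW : ∀ b ∈ W, b ∉ trailArrowSet Sfull)
    (hS : ∀ e ∈ S, ∀ b ∈ e.arrows, b ∈ trailArrowSet Sfull) (w : V) :
    TES (trGraph g Sfull) ⟨P, T.src, w⟩ S := by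
  induction h generalizing P with
  | nonext tr hnon =>
    refine TES.nonext _ ?_
    rintro ⟨b, ⟨hb, hbS⟩, hbP, x, hbx, -⟩
    by_cases hbtr : b ∈ tr.arrows
    · rcases List.mem_append.1 (hPW ▸ hbtr) with hb | hb
      exacts [hbP hb, hW b hb hbS]
    · exact hnon ⟨b, hb, hbtr, x, hbx⟩
  | ext tr a u ars Ss hext hinc hars hlen hrec ih =>
    have hmem : ∀ {b : A} {w : V}, (b, (w, u)) ∈ g.inc →
        b ∈ trailArrowSet Sfull ∧ a ∈ trailArrowSet Sfull := fun hb =>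
      let ⟨e, he, hbe, hae⟩ := (TES.ext tr a u ars Ss hext hinc hars hlen hrec).exists_mem_arrows
        hN hwf.1 hext hinc hb
      ⟨hS e he _ hbe, hS e he _ hae⟩
    have harsS : ∀ b ∈ ars, b ∈ trailArrowSet Sfull := fun b hb =>
      let ⟨_, _, hbw⟩ := (hars.2.1 b).1 hb
      (hmem hbw).1
    have haS : a ∈ trailArrowSet Sfull :=
      let ⟨_, _, hb⟩ := hN.exists_input u (hN.isGraph.cf_of_inc_tk hinc hwf.1)
      (hmem hb).2
    have hextR : ExtendableBy (trGraph g Sfull) ⟨P, tr.src, w⟩ a :=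
      ⟨⟨hext.1, haS⟩, fun haP => hext.2.1 (hPW ▸ List.mem_append_left W haP), u, hinc, haS⟩
    have harsR : InArrowSeq (trGraph g Sfull) u ars := by
      refine ⟨hars.1, fun b => ⟨fun hb => ?_, fun ⟨⟨hb, _⟩, x, hx, _⟩ =>
        (hars.2.1 b).2 ⟨hb, x, hx⟩⟩, fun i b hb =>
          ⟨hars.2.2 i b hb, harsS b (List.mem_of_getElem? hb)⟩⟩
      obtain ⟨hb', x, hx⟩ := (hars.2.1 b).1 hb
      exact ⟨⟨hb', harsS b hb⟩, x, hx, harsS b hb⟩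
    refine TES.ext _ a u ars Ss hextR ⟨hinc, haS⟩ harsR hlen fun i ai si Si hai hSi hsi => ?_
    obtain ⟨htr', hwf'⟩ := isTrailIn_extend hN hext hinc hsi.1 htr hwf
    refine ih i ai si Si hai hSi hsi.1 htr' hwf' (by simp [hPW]) fun e he b hbe =>
      hS _ (mem_flatten_zipWith_map.2 ⟨i, ai, Si, e, hai, hSi, he, rfl⟩) b (by simp [hbe])

/-- `CTS(ic(T)) = TES(T)`. -/
theorem eq_of_trGraph (hN : IsConstructionGraph g) (h : TES g T S) (htr : IsTrailIn g T)
    (hwf : WellFormed g T) {S' : List (Trail V A)}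
    (h' : TES (trGraph g S) (Trail.nil T.src) S') : S' = S := by
  have hfresh : ∀ b ∈ T.arrows, b ∉ trailArrowSet S := fun b hb ⟨e, he, hbe⟩ =>
    List.disjoint_of_nodup_append (h.isTrailIn_append hN htr hwf e he).1.1 hbe hb
  have hres : TES (trGraph g S) (Trail.nil T.src) S :=
    h.restrict_trGraph hN htr hwf (P := []) rfl hfresh (fun e he b hb => ⟨e, he, hb⟩) T.src
  have hsrc : T.src ∈ (trGraph g S).Tk := ⟨hwf.1, h.src_mem_trailVertexSet hN hwf.1⟩
  exact TES.unique (hN.isGraph.trGraph S) (hN.uniStructured.restrict _ _) h' hsrc hres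

end TES

theorem TES.of_generator {g g' : PreGraph V A L} (hG : IsGraph g) (hG' : IsGraph g')
    (hsub : g'.Subgraph g) (hin : ∀ u ∈ g'.Cf, ∀ ars, InArrowSeq g' u ars → InArrowSeq g u ars)
    {T : Trail V A} {trs : List (Trail V A)} (h : TES g' T trs) (hT : T.src ∈ g'.Tk)
    (f : Trail V A → List (Trail V A)) (hf : ∀ tri ∈ trs, TES g (tri.append T) (f tri)) :
    TES g T (trs.flatMap fun tri => rprod (f tri) tri) := by
  induction h generalizing f with
  | nonext tr =>
    have h₀ : TES g tr (f _) := hf _ (List.mem_singleton_self _)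
    rw [List.flatMap_singleton]
    convert h₀ using 1
    exact rprod_nil h₀.tgt_eq
  | ext tr a u ars Ss hext hinc hars hlen hrec ih =>
    have hu : u ∈ g'.Cf := hG'.cf_of_inc_tk hinc hT
    let Us := List.zipWith (fun ai Si =>
      Si.flatMap fun x => rprod (f ⟨x.arrows ++ [ai, a], x.src, tr.src⟩) x) ars Ss
    have hnext := TES.ext tr a u ars Us ⟨hsub.2.2.1 hext.1, hext.2.1, u, hsub.2.2.2.1 hinc⟩
      (hsub.2.2.2.1 hinc) (hin u hu ars hars)
      (by simp [Us, hlen]) fun i ai si Ui hai hUi hsi => ?_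
    · simpa [List.flatMap_def, List.map_flatten, List.flatten_flatten, List.map_zipWith,
        zipWith_zipWith_self, List.map_flatMap, Function.comp_def, rprod_extend, Us] using hnext
    · obtain ⟨ai', Si, hai', hSi, rfl⟩ := List.getElem?_zipWith_eq_some.1 hUi
      obtain rfl : ai = ai' := Option.some_injective _ (hai.symm.trans hai')
      obtain ⟨-, si', hsi'⟩ := (hars.2.1 ai).1 (List.mem_of_getElem? hai)
      obtain rfl : si = si' := congrArg Prod.fst (hG.inc_eq hsi (hsub.2.2.2.1 hsi'))
      refine ih i ai si Si hai hSi hsi' (hG'.tk_of_inc_cf hsi' hu) _ fun x hx => ?_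
      rw [← extend_append tr x ai a si]
      exact hf _ (mem_flatten_zipWith_map.2 ⟨i, ai, Si, x, hai, hSi, hx, rfl⟩)

/-- a split of a construction determines its complete trail sequence:
`CTS(g, t) = (CTS(ic(tr1)) ◁ tr1) ⊕ ⋯ ⊕ (CTS(ic(trn)) ◁ trn)`. -/
theorem split_preserves_complete_trail_sequence {V A L : Type*}
    (Cs : CSpace V A L) (hCs : IsCSpace Cs)
    (g : PreGraph V A L) (t : V) (hc : IsConstruction Cs g t)
    (g' : PreGraph V A L) (hc' : IsConstruction Cs g' t) (hsub : g'.Subgraph g)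
    (trs : List (Trail V A)) (hgen : TES g' (Trail.nil t) trs)
    (Ss Cis : List (List (Trail V A)))
    (hSlen : Ss.length = trs.length) (hClen : Cis.length = trs.length)
    (hTES : ∀ (i : ℕ) (tri : Trail V A) (Si : List (Trail V A)),
        trs[i]? = some tri → Ss[i]? = some Si → TES g tri Si)
    (hCTSic : ∀ (i : ℕ) (tri : Trail V A) (Si Ci : List (Trail V A)),
        trs[i]? = some tri → Ss[i]? = some Si → Cis[i]? = some Ci →
        TES (trGraph g Si) (Trail.nil tri.src) Ci)
    (S : List (Trail V A)) (hCTS : TES g (Trail.nil t) S) :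
    S = (List.zipWith rprod Cis trs).flatten := by
  have hN := hc.isConstructionGraph hCs
  have hN' := hc'.isConstructionGraph hCs
  have ht' : t ∈ g'.Tk := hc'.tok_mem
  have hnil : ∀ tri ∈ trs, tri.append (Trail.nil t) = tri := fun tri htri =>
    Trail.append_nil_of_tgt (v := t) (hgen.tgt_eq tri htri)
  have hwf : ∀ tri ∈ trs, IsTrailIn g tri ∧ WellFormed g tri := fun tri htri =>
    let h := hgen.isTrailIn_of_nil hN' ht' tri htri
    ⟨h.1.mono hsub, h.2.mono hsub⟩
  obtain ⟨f, hf⟩ : ∃ f : Trail V A → List (Trail V A), ∀ tri ∈ trs, TES g tri (f tri) := by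
    refine ⟨fun tri => Classical.epsilon (TES g tri), fun tri htri => Classical.epsilon_spec ?_⟩
    obtain ⟨i, hi⟩ := List.mem_iff_getElem?.1 htri
    have hiS : i < Ss.length := hSlen ▸ (List.getElem?_eq_some_iff.1 hi).1
    exact ⟨_, hTES i tri _ hi (List.getElem?_eq_getElem hiS)⟩
  have hSs : Ss = trs.map f := eq_map_of_forall_getElem? hSlen fun i tri Si htri hSi =>
    (hTES i tri Si htri hSi).unique hN.isGraph hN.uniStructured
      (hwf tri (List.mem_of_getElem? htri)).2.1 (hf tri (List.mem_of_getElem? htri))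
  have hCis : Cis = trs.map f := eq_map_of_forall_getElem? hClen fun i tri Ci htri hCi =>
    have hmem := List.mem_of_getElem? htri
    (hf tri hmem).eq_of_trGraph hN (hwf tri hmem).1 (hwf tri hmem).2
      (hCTSic i tri _ Ci htri (by simp [hSs, htri]) hCi)
  have hdecomp : TES g (Trail.nil t) (trs.flatMap fun tri => rprod (f tri) tri) :=
    hgen.of_generator hN.isGraph hN'.isGraph hsub
      (fun u hu _ => hc.2.1.inArrowSeq_of_subgraph hCs.2.2.1 hc'.2.1 hsub hu) ht' f
      fun tri htri => (hnil tri htri).symm ▸ hf tri htri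
  rw [hCis, List.zipWith_map_left, List.zipWith_self]
  exact hCTS.unique hN.isGraph hN.uniStructured hc.tok_mem hdecomp

end RST
end
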